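/- arXiv:2603.14795 — 2 statements merged into one kernel-verified Lean document; each statement's English description precedes it below -/
import Mathlib

section
/- For every integer N ≥ 2, the determinant of the cosine matrix C_N equals (−1)^{N⁺(N⁺+1)/2} · N^{(N⁺+1)/2} / 2^{N⁺+1}. -/
/-!
Up to the weights `c_n` of its columns, `C_N` is the matrix of the Chebyshev polynomials
`T_0, …, T_{N⁺}` evaluated at the nodes `x_m = cos(2πm/N)`. Discrete orthogonality of the
cosines (the weights exactly compensate folding a sum over `ℤ/N` onto `0 ≤ n ≤ N⁺`) gives
`C_N² = (N/4)·I`, so `|det C_N| = (√N/2)^{N⁺+1}`. For the sign, `C_N = V·U` with `V` the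
Vandermonde matrix of the nodes and `U` upper triangular with positive diagonal (the weighted
leading coefficients `2^{n-1}` of `T_n`); the nodes decrease, so `det V` has the sign of
`(-1)^{N⁺(N⁺+1)/2}`.
-/

/-- The discrete cosine matrix `C_N`, of size `(N⁺+1) × (N⁺+1)` with `N⁺ = ⌊N/2⌋`:
its `(m,n)` entry is `c_n · cos(2πmn/N)` where `c_n = 1/2` if `n = 0` or if `N` is even
and `n = N/2`, and `c_n = 1` otherwise. -/
noncomputable def cosMatrix (N : ℕ) : Matrix (Fin (N / 2 + 1)) (Fin (N / 2 + 1)) ℝ :=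
  Matrix.of fun m n =>
    (if (n : ℕ) = 0 ∨ (N % 2 = 0 ∧ (n : ℕ) = N / 2) then (1 / 2 : ℝ) else 1) *
      Real.cos (2 * Real.pi * (m : ℕ) * (n : ℕ) / N)

open Real Finset Polynomial Polynomial.Chebyshev

noncomputable def cosWeight (N n : ℕ) : ℝ := if n = 0 ∨ (N % 2 = 0 ∧ n = N / 2) then 1 / 2 else 1

theorem cosMatrix_apply (N : ℕ) (m n : Fin (N / 2 + 1)) :
    cosMatrix N m n = cosWeight N n * cos (2 * π * (m : ℕ) * (n : ℕ) / N) :=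
  rfl

theorem sum_range_cos_two_pi_mul_div {N : ℕ} (hN : N ≠ 0) (a : ℤ) :
    ∑ n ∈ range N, cos (2 * π * a * n / N) = if (N : ℤ) ∣ a then (N : ℝ) else 0 := by
  set ζ := Complex.exp (2 * π * Complex.I / N)
  have hζ : IsPrimitiveRoot ζ N := Complex.isPrimitiveRoot_exp N hN
  have hz_pow (n : ℕ) : ((ζ ^ a) ^ n).re = cos (2 * π * a * n / N) := by
    rw [← zpow_natCast, ← zpow_mul, ← Complex.exp_int_mul, ← Complex.exp_ofReal_mul_I_re]
    congr 2
    push_cast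
    ring
  have hsum : ∑ n ∈ range N, (ζ ^ a) ^ n = if (N : ℤ) ∣ a then (N : ℂ) else 0 := by
    simp only [← hζ.zpow_eq_one_iff_dvd]
    by_cases hz : ζ ^ a = 1
    · simp [hz]
    · have hzN : (ζ ^ a) ^ N = 1 := by
        rw [← zpow_natCast, ← zpow_mul, mul_comm, zpow_mul, zpow_natCast, hζ.pow_eq_one, one_zpow]
      rw [if_neg hz, geom_sum_eq hz, hzN, sub_self, zero_div]
  simp_rw [← hz_pow, ← Complex.re_sum, hsum]
  split_ifs <;> simp

theorem sum_range_cos_mul_cos {N : ℕ} (hN : N ≠ 0) (a b : ℤ) :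
    ∑ n ∈ range N, cos (2 * π * a * n / N) * cos (2 * π * b * n / N) =
      ((if (N : ℤ) ∣ a + b then (N : ℝ) else 0) + if (N : ℤ) ∣ a - b then (N : ℝ) else 0) / 2 := by
  rw [← sum_range_cos_two_pi_mul_div hN, ← sum_range_cos_two_pi_mul_div hN, ← sum_add_distrib,
    sum_div]
  refine sum_congr rfl fun n _ => ?_
  have hadd : 2 * π * ((a + b : ℤ) : ℝ) * n / N = 2 * π * a * n / N + 2 * π * b * n / N := by
    push_cast; ring
  have hsub : 2 * π * ((a - b : ℤ) : ℝ) * n / N = 2 * π * a * n / N - 2 * π * b * n / N := by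
    push_cast; ring
  rw [hadd, hsub, cos_add, cos_sub]
  ring

theorem two_mul_sum_cosWeight_mul {N : ℕ} (hN : 0 < N) {f : ℕ → ℝ}
    (hf : ∀ n ≤ N, f (N - n) = f n) :
    2 * ∑ n ∈ range (N / 2 + 1), cosWeight N n * f n = ∑ n ∈ range N, f n := by
  have hweight : ∀ n ∈ range (N / 2 + 1),
      2 * (cosWeight N n * f n) = f n + if n ∈ Ico 1 (N - N / 2) then f n else 0 := by
    intro n hn
    simp only [mem_range] at hn
    simp only [cosWeight, mem_Ico]
    split_ifs <;> first | omega | ring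
  have hreflect : ∑ n ∈ Ico (N / 2 + 1) N, f n = ∑ n ∈ Ico 1 (N - N / 2), f n := by
    rw [← sum_congr rfl fun n hn => hf n (mem_Ico.1 hn).2.le, sum_Ico_reflect f _ N.le_succ,
      Nat.add_sub_cancel_left, Nat.add_sub_add_right]
  have hsub : Ico 1 (N - N / 2) ⊆ range (N / 2 + 1) := by
    intro n; simp only [mem_Ico, mem_range]; omega
  rw [mul_sum, sum_congr rfl hweight, sum_add_distrib, sum_ite_mem, inter_eq_right.2 hsub,
    ← hreflect, sum_range_add_sum_Ico f (by omega)]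

theorem cos_two_pi_mul_sub_div {N j n : ℕ} (hn : n ≤ N) :
    cos (2 * π * j * (N - n : ℕ) / N) = cos (2 * π * j * n / N) := by
  rcases N.eq_zero_or_pos with rfl | hN
  · simp
  rw [Nat.cast_sub hn, ← cos_nat_mul_two_pi_sub _ j]
  congr 1
  field_simp
  ring

theorem natCast_dvd_sub_iff_eq_of_lt {N m k : ℕ} (hm : m < N) (hk : k < N) :
    (N : ℤ) ∣ m - k ↔ m = k := by
  refine ⟨fun h => ?_, by rintro rfl; simp⟩
  have := Int.eq_zero_of_abs_lt_dvd h (abs_lt.2 ⟨by omega, by omega⟩)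
  omega

theorem natCast_dvd_add_iff_of_le_half {N m k : ℕ} (hm : m ≤ N / 2) (hk : k ≤ N / 2) :
    (N : ℤ) ∣ m + k ↔ m = k ∧ (k = 0 ∨ (N % 2 = 0 ∧ k = N / 2)) := by
  rw [← Nat.cast_add, Int.natCast_dvd_natCast]
  constructor
  · intro h
    rcases (show m + k < N ∨ m + k = N by omega) with hlt | heq
    · have := Nat.eq_zero_of_dvd_of_lt h hlt
      omega
    · omega
  · rintro ⟨rfl, rfl | ⟨hEven, rfl⟩⟩
    · simp
    · exact ⟨1, by omega⟩

theorem cosMatrix_mul_self {N : ℕ} (hN : 0 < N) :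
    cosMatrix N * cosMatrix N = ((N : ℝ) / 4) • 1 := by
  ext m k
  have hm : (m : ℕ) ≤ N / 2 := Nat.lt_succ_iff.1 m.isLt
  have hk : (k : ℕ) ≤ N / 2 := Nat.lt_succ_iff.1 k.isLt
  set f : ℕ → ℝ := fun n => cos (2 * π * (m : ℕ) * n / N) * cos (2 * π * (k : ℕ) * n / N)
  have hf : ∀ n ≤ N, f (N - n) = f n := fun n hn => by
    simp only [f, cos_two_pi_mul_sub_div hn]
  have hentry : (cosMatrix N * cosMatrix N) m k =
      cosWeight N k * ∑ n ∈ range (N / 2 + 1), cosWeight N n * f n := by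
    rw [Matrix.mul_apply, mul_sum, ← Fin.sum_univ_eq_sum_range]
    refine sum_congr rfl fun n _ => ?_
    simp only [cosMatrix_apply, f]
    ring_nf
  have hcos := sum_range_cos_mul_cos hN.ne' (m : ℕ) (k : ℕ)
  push_cast at hcos
  have hsum := (two_mul_sum_cosWeight_mul hN hf).trans hcos
  simp only [natCast_dvd_add_iff_of_le_half hm hk,
    natCast_dvd_sub_iff_eq_of_lt (by omega : (m : ℕ) < N) (by omega : (k : ℕ) < N),
    Fin.val_inj] at hsum
  rw [hentry, Matrix.smul_apply, Matrix.one_apply, smul_eq_mul]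
  by_cases hmk : m = k
  · -- `N ∣ 2k` exactly when `c_k = 1/2`, so in both cases `c_k · (N·[N ∣ 2k] + N) = N`.
    subst hmk
    simp only [true_and, if_true, mul_one, cosWeight] at hsum ⊢
    split_ifs at hsum ⊢ <;> linarith
  · simp only [hmk, false_and, if_false, add_zero, zero_div, mul_zero] at hsum ⊢
    exact mul_eq_zero_of_right _ (by linarith)

theorem Matrix.det_matrixOfPolynomials_eq_prod_coeff {R : Type*} [CommRing R] {n : ℕ}
    (p : Fin n → R[X]) (h_deg : ∀ i, (p i).natDegree ≤ i) :
    (Matrix.of fun i j : Fin n => (p j).coeff i).det = ∏ i, (p i).coeff i :=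
  Matrix.det_of_isUpperTriangular (Matrix.matrixOfPolynomials_blockTriangular p h_deg)

theorem Fin.sum_card_Ioi (n : ℕ) : ∑ i : Fin n, #(Ioi i) = n * (n - 1) / 2 := by
  simp_rw [Fin.card_Ioi]
  rw [Fin.sum_univ_eq_sum_range (fun i => n - 1 - i), sum_range_reflect (fun i => i), sum_range_id]

theorem Matrix.neg_one_pow_mul_det_vandermonde_pos_of_strictAnti {R : Type*} [CommRing R]
    [LinearOrder R] [IsStrictOrderedRing R] {n : ℕ} {v : Fin n → R} (hv : StrictAnti v) :
    0 < (-1) ^ (n * (n - 1) / 2) * (Matrix.vandermonde v).det := by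
  rw [Matrix.det_vandermonde, ← Fin.sum_card_Ioi, ← prod_pow_eq_pow_sum, ← prod_mul_distrib]
  refine prod_pos fun i _ => ?_
  rw [← prod_const, ← prod_mul_distrib]
  refine prod_pos fun j hj => ?_
  simpa using hv (mem_Ioi.1 hj)

theorem strictAnti_cos_two_pi_mul_div {N : ℕ} (hN : 0 < N) :
    StrictAnti fun m : Fin (N / 2 + 1) => cos (2 * π * (m : ℕ) / N) := by
  have hmem (m : Fin (N / 2 + 1)) : 2 * π * (m : ℕ) / N ∈ Set.Icc 0 π := by
    refine ⟨by positivity, ?_⟩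
    have hm : 2 * ((m : ℕ) : ℝ) ≤ N := by exact_mod_cast (by omega : 2 * (m : ℕ) ≤ N)
    rw [div_le_iff₀ (by positivity)]
    nlinarith [pi_pos]
  exact fun i j hij => strictAntiOn_cos (hmem i) (hmem j) (by gcongr; exact_mod_cast hij)

noncomputable def weightedChebyshevT (N j : ℕ) : ℝ[X] := C (cosWeight N j) * T ℝ j

theorem natDegree_weightedChebyshevT_le (N j : ℕ) : (weightedChebyshevT N j).natDegree ≤ j :=
  natDegree_C_mul_le _ _ |>.trans (by simp)

theorem coeff_weightedChebyshevT_self_pos (N j : ℕ) : 0 < (weightedChebyshevT N j).coeff j := by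
  have hT : (T ℝ j).coeff j = 2 ^ (j - 1) := by
    simpa using (T ℝ j).coeff_natDegree
  rw [weightedChebyshevT, coeff_C_mul, hT, cosWeight]
  split_ifs <;> positivity

theorem cosMatrix_eq_vandermonde_mul (N : ℕ) :
    cosMatrix N = Matrix.vandermonde (fun m : Fin (N / 2 + 1) => cos (2 * π * (m : ℕ) / N)) *
      Matrix.of fun i j : Fin (N / 2 + 1) => (weightedChebyshevT N j).coeff i := by
  rw [← Matrix.eval_matrixOfPolynomials_eq_vandermonde_mul_matrixOfPolynomials _ _
    fun j => natDegree_weightedChebyshevT_le N j]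
  ext m n
  simp only [cosMatrix_apply, Matrix.of_apply, weightedChebyshevT, eval_mul, eval_C, T_real_cos]
  push_cast
  ring_nf

/-- For every integer `N ≥ 2`,
`det C_N = (−1)^{N⁺(N⁺+1)/2} · N^{(N⁺+1)/2} / 2^{N⁺+1}` where `N⁺ = ⌊N/2⌋`. -/
theorem det_cosMatrix (N : ℕ) (hN : 2 ≤ N) :
    (cosMatrix N).det =
      (-1 : ℝ) ^ (N / 2 * (N / 2 + 1) / 2) * Real.sqrt N ^ (N / 2 + 1) / 2 ^ (N / 2 + 1) := by
  have hN0 : 0 < N := by omega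
  set s : ℝ := (-1) ^ (N / 2 * (N / 2 + 1) / 2)
  have hpos : 0 < s * (cosMatrix N).det := by
    have hV := Matrix.neg_one_pow_mul_det_vandermonde_pos_of_strictAnti
      (strictAnti_cos_two_pi_mul_div hN0)
    rw [Nat.add_sub_cancel, Nat.mul_comm] at hV
    rw [cosMatrix_eq_vandermonde_mul, Matrix.det_mul, ← mul_assoc,
      Matrix.det_matrixOfPolynomials_eq_prod_coeff _ fun j => natDegree_weightedChebyshevT_le N j]
    exact mul_pos hV (prod_pos fun j _ => coeff_weightedChebyshevT_self_pos N j)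
  have hs : s ^ 2 = 1 := by rw [pow_right_comm, neg_one_sq, one_pow]
  have hdet_sq : (cosMatrix N).det ^ 2 = ((N : ℝ) / 4) ^ (N / 2 + 1) := by
    rw [sq, ← Matrix.det_mul, cosMatrix_mul_self hN0, Matrix.det_smul, Matrix.det_one, mul_one,
      Fintype.card_fin]
  have hsq : (s * (cosMatrix N).det) ^ 2 = (sqrt N ^ (N / 2 + 1) / 2 ^ (N / 2 + 1)) ^ 2 := by
    rw [mul_pow, hs, one_mul, hdet_sq, ← div_pow, pow_right_comm, div_pow (√N),
      sq_sqrt N.cast_nonneg]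
    norm_num
  rw [mul_div_assoc, ← (sq_eq_sq₀ hpos.le (by positivity)).1 hsq, ← mul_assoc, ← sq, hs, one_mul]
end

section
/- Let k ≥ 2 be an even integer, M ≥ 2 an integer, and 1 ≤ t ≤ M−1. Then (1/2)·Σ_{r=1}^{M} B̃_k(r/M)·cos(2πtr/M) = ((−1)^{k/2+1}·k! / (2·(2π)^k)) · M^{1−k} · ( ζ(k, t/M) + ζ(k, 1 − t/M) ). -/
open scoped Classical in
/-- The periodic Bernoulli function `B̃_k(x) = B_k({x})`, with the convention
`B̃_1(x) = 0` for integer `x`. -/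
noncomputable def periodicBernoulli (k : ℕ) (x : ℝ) : ℝ :=
  if k = 1 ∧ Int.fract x = 0 then 0
  else Polynomial.aeval (Int.fract x) (Polynomial.bernoulli k)

/-- The Hurwitz zeta value `ζ(k,a) = Σ_{n ≥ 0} (n+a)^{−k}` (for `k ≥ 2`, `0 < a ≤ 1`). -/
noncomputable def hurwitzZetaValue (k : ℕ) (a : ℝ) : ℝ :=
  ∑' n : ℕ, 1 / ((n : ℝ) + a) ^ k

/-! For even `k` and `x ∈ [0, 1]` the Fourier series
`B_k(x) = (-1)^(k/2+1) · 2 · k! / (2π)^k · ∑_{n ≥ 1} cos (2πnx) / n^k` holds, and `B̃_k(r/M) = B_k(r/M)`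
for `1 ≤ r ≤ M`. Exchanging the sum over `r` with the series, the inner sum
`∑_r cos (2πnr/M) cos (2πtr/M)` is `M/2` times the number of signs with `n ≡ ±t mod M`, by
orthogonality of the additive characters of `ℤ/Mℤ`. The series therefore splits into the residue
classes `t` and `-t` mod `M`, whose sums are `M^(-k) ζ(k, t/M)` and `M^(-k) ζ(k, 1 - t/M)`. -/

open Real Finset

theorem periodicBernoulli_eq_bernoulliFun {k : ℕ} (hk : k ≠ 1) {x : ℝ} (hx : x ∈ Set.Icc 0 1) :
    periodicBernoulli k x = bernoulliFun k x := by
  rw [periodicBernoulli, if_neg (by tauto), Polynomial.aeval_def, ← Polynomial.eval_map]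
  rcases hx.2.eq_or_lt with rfl | hx1
  · rw [Int.fract_one, bernoulliFun_endpoints_eq_of_ne_one hk]
    rfl
  · rw [Int.fract_eq_self.2 ⟨hx.1, hx1⟩]
    rfl

theorem hasSum_one_div_nat_pow_mul_cos_of_even {k : ℕ} (hk : k ≠ 0) (hke : Even k) {x : ℝ}
    (hx : x ∈ Set.Icc 0 1) :
    HasSum (fun n : ℕ => 1 / (n : ℝ) ^ k * cos (2 * π * n * x))
      ((-1 : ℝ) ^ (k / 2 + 1) * (2 * π) ^ k / 2 / Nat.factorial k * bernoulliFun k x) := by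
  obtain ⟨m, rfl⟩ := hke
  rw [← two_mul, Nat.mul_div_cancel_left m two_pos]
  exact hasSum_one_div_nat_pow_mul_cos (by omega) hx

theorem hasSum_one_div_nat_pow_mul_sum_Icc_cos_mul {k : ℕ} (hk : k ≠ 0) (hke : Even k) (M : ℕ)
    (w : ℕ → ℝ) :
    HasSum (fun n : ℕ => 1 / (n : ℝ) ^ k * ∑ r ∈ Icc 1 M, cos (2 * π * n * r / M) * w r)
      ((-1 : ℝ) ^ (k / 2 + 1) * (2 * π) ^ k / 2 / Nat.factorial k *
        ∑ r ∈ Icc 1 M, periodicBernoulli k (r / M) * w r) := by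
  simp_rw [mul_sum]
  refine hasSum_sum fun r hr => ?_
  have hrM : (r : ℝ) / M ∈ Set.Icc 0 1 :=
    ⟨by positivity, div_le_one_of_le₀ (by exact_mod_cast (mem_Icc.1 hr).2) (by positivity)⟩
  rw [periodicBernoulli_eq_bernoulliFun (by rintro rfl; exact Nat.not_even_one hke) hrM,
    ← mul_assoc]
  refine ((hasSum_one_div_nat_pow_mul_cos_of_even hk hke hrM).mul_right (w r)).congr_fun
    fun n => ?_
  simp only [mul_div_assoc, mul_assoc]

open Complex in
theorem sum_Icc_cexp_two_pi_I_mul_div (M : ℕ) [NeZero M] (j : ℤ) :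
    ∑ r ∈ Icc 1 M, cexp (2 * π * I * j * r / M) = if (j : ZMod M) = 0 then (M : ℂ) else 0 := by
  set ζ := cexp (2 * π * I / M)
  have hζ : IsPrimitiveRoot ζ M := isPrimitiveRoot_exp M (NeZero.ne M)
  have hpow (r : ℕ) : cexp (2 * π * I * j * r / M) = (ζ ^ j) ^ r := by
    rw [← zpow_natCast, ← zpow_mul, ← exp_int_mul]
    push_cast
    ring_nf
  simp_rw [hpow]
  split_ifs with hj
  · rw [(hζ.zpow_eq_one_iff_dvd j).2 ((ZMod.intCast_zmod_eq_zero_iff_dvd j M).1 hj)]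
    simp
  · have hw1 : ζ ^ j ≠ 1 := fun h => hj ((ZMod.intCast_zmod_eq_zero_iff_dvd j M).2
      ((hζ.zpow_eq_one_iff_dvd j).1 h))
    have hwM : (ζ ^ j) ^ M = 1 := by
      rw [← zpow_natCast, ← zpow_mul, mul_comm, zpow_mul, zpow_natCast, hζ.pow_eq_one, one_zpow]
    rw [← Finset.Ico_add_one_right_eq_Icc, sum_Ico_eq_sum_range, Nat.add_sub_cancel]
    simp_rw [pow_add, pow_one, ← mul_sum, geom_sum_eq hw1, hwM, sub_self, zero_div, mul_zero]

theorem sum_Icc_cos_two_pi_mul_div (M : ℕ) [NeZero M] (j : ℤ) :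
    ∑ r ∈ Icc 1 M, cos (2 * π * j * r / M) = if (j : ZMod M) = 0 then (M : ℝ) else 0 := by
  have h := congrArg Complex.re (sum_Icc_cexp_two_pi_I_mul_div M j)
  rw [Complex.re_sum] at h
  convert h using 1
  · refine sum_congr rfl fun r _ => ?_
    rw [← Complex.exp_ofReal_mul_I_re]
    push_cast
    ring_nf
  · split_ifs <;> simp

theorem sum_Icc_cos_mul_cos (M : ℕ) [NeZero M] (n t : ℤ) :
    ∑ r ∈ Icc 1 M, cos (2 * π * n * r / M) * cos (2 * π * t * r / M) =
      M / 2 * ((if (n : ZMod M) = -t then 1 else 0) + (if (n : ZMod M) = t then 1 else 0)) := by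
  have hprod (r : ℕ) : cos (2 * π * n * r / M) * cos (2 * π * t * r / M) =
      (cos (2 * π * (n + t : ℤ) * r / M) + cos (2 * π * (n - t : ℤ) * r / M)) / 2 := by
    rw [show 2 * π * (n + t : ℤ) * r / M = 2 * π * n * r / M + 2 * π * t * r / M by push_cast; ring,
      show 2 * π * (n - t : ℤ) * r / M = 2 * π * n * r / M - 2 * π * t * r / M by push_cast; ring,
      cos_add, cos_sub]
    ring
  simp_rw [hprod, ← sum_div, sum_add_distrib, sum_Icc_cos_two_pi_mul_div, Int.cast_add,
    Int.cast_sub, add_eq_zero_iff_eq_neg, sub_eq_zero]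
  split_ifs <;> ring

theorem hurwitzZetaValue_div_eq_mul_tsum {M : ℝ} (hM : M ≠ 0) (k : ℕ) (a : ℝ) :
    hurwitzZetaValue k (a / M) = M ^ k * ∑' m : ℕ, 1 / (a + M * m) ^ k := by
  rw [hurwitzZetaValue, ← tsum_mul_left]
  congr 1 with m
  rw [show (m : ℝ) + a / M = (a + M * m) / M by field_simp; ring, div_pow, one_div_div,
    mul_one_div]

/-- For `a = 0` both sides rely on `1 / 0 = 0` for the term `n = 0`. -/
theorem hasSum_ite_natCast_eq_one_div_pow {k : ℕ} (hk : 1 < k) (M : ℕ) [NeZero M] (a : ZMod M) :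
    HasSum (fun n : ℕ => if (n : ZMod M) = a then 1 / (n : ℝ) ^ k else 0)
      (hurwitzZetaValue k (a.val / M) / M ^ k) := by
  have hsum : Summable fun n : ℕ => if (n : ZMod M) = a then 1 / (n : ℝ) ^ k else 0 :=
    (Real.summable_one_div_nat_pow.2 hk).of_nonneg_of_le (fun n => by positivity)
      (fun n => by split_ifs; exacts [le_rfl, by positivity])
  have hcast (j : ZMod M) (m : ℕ) : ((j.val + M * m : ℕ) : ZMod M) = j := by simp
  convert hsum.hasSum using 1
  rw [Nat.sumByResidueClasses hsum M, hurwitzZetaValue_div_eq_mul_tsum (NeZero.ne (M : ℝ))]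
  simp only [hcast]
  rw [sum_eq_single a (fun j _ hj => by simp [hj]) (by simp)]
  push_cast
  simp only [if_true]
  exact mul_div_cancel_left₀ _ (pow_ne_zero k (NeZero.ne (M : ℝ)))

theorem hasSum_one_div_nat_pow_mul_sum_Icc_cos_mul_cos {k : ℕ} (hk : 1 < k) (M : ℕ) [NeZero M]
    (t : ℤ) :
    HasSum (fun n : ℕ => 1 / (n : ℝ) ^ k *
        ∑ r ∈ Icc 1 M, cos (2 * π * n * r / M) * cos (2 * π * t * r / M))
      (M / 2 / M ^ k * (hurwitzZetaValue k ((-t : ZMod M).val / M) +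
        hurwitzZetaValue k ((t : ZMod M).val / M))) := by
  have hcos (n : ℕ) := sum_Icc_cos_mul_cos M n t
  push_cast at hcos
  have hsplit : (fun n : ℕ => 1 / (n : ℝ) ^ k * (M / 2 *
      ((if (n : ZMod M) = -t then 1 else 0) + (if (n : ZMod M) = t then 1 else 0)))) =
      fun n : ℕ => M / 2 * ((if (n : ZMod M) = -t then 1 / (n : ℝ) ^ k else 0) +
        (if (n : ZMod M) = t then 1 / (n : ℝ) ^ k else 0)) := by
    funext n
    split_ifs <;> ring
  simp_rw [hcos]
  rw [hsplit, div_mul_eq_mul_div, mul_div_assoc, add_div]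
  exact ((hasSum_ite_natCast_eq_one_div_pow hk M (-t)).add
    (hasSum_ite_natCast_eq_one_div_pow hk M t)).mul_left (M / 2 : ℝ)

theorem cos_transform_periodicBernoulli_general (k M t : ℕ) (hk : 2 ≤ k) (hke : Even k)
    (ht1 : 1 ≤ t) (ht2 : t ≤ M - 1) :
    (1 / 2 : ℝ) * ∑ r ∈ Finset.Icc 1 M,
        periodicBernoulli k ((r : ℝ) / M) * Real.cos (2 * Real.pi * t * r / M) =
      ((-1 : ℝ) ^ (k / 2 + 1) * (Nat.factorial k) / (2 * (2 * Real.pi) ^ k)) *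
        (M : ℝ) ^ (1 - (k : ℤ)) *
        (hurwitzZetaValue k ((t : ℝ) / M) + hurwitzZetaValue k (1 - (t : ℝ) / M)) := by
  have : NeZero M := ⟨by omega⟩
  have hM0 : (M : ℝ) ≠ 0 := NeZero.ne _
  have hfourier := hasSum_one_div_nat_pow_mul_sum_Icc_cos_mul (by omega) hke M
    fun r => cos (2 * π * t * r / M)
  have hzeta := hasSum_one_div_nat_pow_mul_sum_Icc_cos_mul_cos (k := k) (by omega) M t
  have hval : (t : ZMod M).val = t := ZMod.val_natCast_of_lt (by omega)
  have hval_neg : (-(t : ZMod M)).val = M - t := by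
    rw [ZMod.neg_val, if_neg fun h => by rw [h, ZMod.val_zero] at hval; omega, hval]
  have hsub : ((M - t : ℕ) : ℝ) / M = 1 - t / M := by
    rw [Nat.cast_sub (by omega), sub_div, div_self hM0]
  push_cast at hzeta
  rw [hval, hval_neg, hsub, add_comm] at hzeta
  have hS := hfourier.unique hzeta
  have hsign : (-1 : ℝ) ^ (k / 2 + 1) * (-1) ^ (k / 2 + 1) = 1 := by
    rw [← mul_pow, neg_one_mul, neg_neg, one_pow]
  rw [zpow_sub₀ hM0, zpow_one, zpow_natCast]
  set S := ∑ r ∈ Icc 1 M, periodicBernoulli k (r / M) * cos (2 * π * t * r / M)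
  set Z := hurwitzZetaValue k (t / M) + hurwitzZetaValue k (1 - t / M)
  set s := (-1 : ℝ) ^ (k / 2 + 1)
  field_simp at hS ⊢
  linear_combination s * hS - (2 * π) ^ k * S * M ^ k * hsign

/-- For even `k ≥ 2`, `M ≥ 2` and `1 ≤ t ≤ M−1`,
`(1/2)·Σ_{r=1}^{M} B̃_k(r/M)·cos(2πtr/M)
  = ((−1)^{k/2+1}·k!/(2·(2π)^k)) · M^{1−k} · (ζ(k,t/M) + ζ(k,1−t/M))`. -/
theorem cos_transform_periodicBernoulli (k M t : ℕ) (hk : 2 ≤ k) (hke : Even k)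
    (hM : 2 ≤ M) (ht1 : 1 ≤ t) (ht2 : t ≤ M - 1) :
    (1 / 2 : ℝ) * ∑ r ∈ Finset.Icc 1 M,
        periodicBernoulli k ((r : ℝ) / M) * Real.cos (2 * Real.pi * t * r / M) =
      ((-1 : ℝ) ^ (k / 2 + 1) * (Nat.factorial k) / (2 * (2 * Real.pi) ^ k)) *
        (M : ℝ) ^ (1 - (k : ℤ)) *
        (hurwitzZetaValue k ((t : ℝ) / M) + hurwitzZetaValue k (1 - (t : ℝ) / M)) :=
  cos_transform_periodicBernoulli_general k M t hk hke ht1 ht2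
end
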